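/- arXiv:2006.07019 — 4 statements merged into one kernel-verified Lean document; each statement's English description precedes it below -/
import Mathlib

section
/- Let h: S → ℝ≥0 be a convex function on S ⊆ ℝ such that id - h is monotone non-decreasing (h is greed-admitting). Let (X_t) be a stochastic process on S adapted to a filtration (F_t) satisfying E[X_t - X_{t+1} | F_t] ≥ h(X_t) for all t. Define h̃(x) = x - h(x). Then for all t ≥ 0, E[X_t | F_0] ≤ h̃^t(X_0), where h̃^t denotes the t-fold composition of h̃. -/
/-!
Write `g x = x - h x`; it is concave and non-decreasing on `S`, and `g x ≤ x`. Conditioning on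
`ℱ t`, the drift condition reads `μ[X (t+1) | ℱ t] ≤ g (X t)`. Conditioning further on `ℱ 0`, the
tower property and the conditional Jensen inequality give
`μ[X (t+1) | ℱ 0] ≤ μ[g (X t) | ℱ 0] ≤ g (μ[X t | ℱ 0]) ≤ g (g^[t] (X 0))`,
the last step by induction and monotonicity of `g`.

Jensen's inequality is needed for a concave function on an arbitrary interval, without any
semicontinuity. At interior points of `S` the function is the infimum of countably many supporting
lines, taken at rational points; at an endpoint `e` of `S`, where it may jump, the event
`μ[X | m] = e` forces `X = e` almost surely.
-/

open MeasureTheory Filter Set Topology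

lemma MonotoneOn.measurable_comp {Ω : Type*} [MeasurableSpace Ω] {S : Set ℝ} {g : ℝ → ℝ}
    (hg : MonotoneOn g S) {Y : Ω → ℝ} (hY : Measurable Y) (hYS : ∀ ω, Y ω ∈ S) :
    Measurable (g ∘ Y) :=
  have hmono : Monotone fun x : S => g x := fun x y hxy => hg x.2 y.2 hxy
  hmono.measurable.comp (hY.subtype_mk (h := hYS))

namespace Set.OrdConnected

variable {S : Set ℝ}

lemma isLeast_or_isGreatest_of_notMem_interior (hS : S.OrdConnected) {x : ℝ} (hx : x ∈ S)
    (hxi : x ∉ interior S) : IsLeast S x ∨ IsGreatest S x := by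
  by_contra! h
  simp only [IsLeast, IsGreatest, hx, true_and, mem_lowerBounds, mem_upperBounds, not_forall,
    not_le] at h
  obtain ⟨⟨a, ha, hxa⟩, ⟨b, hb, hbx⟩⟩ := h
  exact hxi (mem_interior_iff_mem_nhds.2 (mem_of_superset (Ioo_mem_nhds hxa hbx)
    (Ioo_subset_Icc_self.trans (hS.out ha hb))))

lemma countable_sdiff_interior (hS : S.OrdConnected) : (S \ interior S).Countable := by
  refine (Set.toFinite {sInf S, sSup S}).countable.mono fun x ⟨hx, hxi⟩ => ?_
  rcases hS.isLeast_or_isGreatest_of_notMem_interior hx hxi with h | h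
  · exact Or.inl h.csInf_eq.symm
  · exact Or.inr h.csSup_eq.symm

end Set.OrdConnected

namespace ConvexOn

variable {S : Set ℝ} {f : ℝ → ℝ}

lemma add_rightDeriv_mul_sub_le (hf : ConvexOn ℝ S f) {x y : ℝ} (hx : x ∈ interior S)
    (hy : y ∈ S) : f x + derivWithin f (Ioi x) x * (y - x) ≤ f y := by
  rcases lt_trichotomy x y with hxy | rfl | hyx
  · have h := hf.rightDeriv_le_slope_of_mem_interior hx hy hxy
    rw [slope_def_field, le_div_iff₀ (sub_pos.2 hxy)] at h
    linarith
  · simp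
  · have hleft := hf.slope_le_leftDeriv_of_mem_interior hy hx hyx
    rw [slope_def_field, div_le_iff₀ (sub_pos.2 hyx)] at hleft
    nlinarith [mul_le_mul_of_nonneg_right (hf.leftDeriv_le_rightDeriv_of_mem_interior hx)
      (sub_pos.2 hyx).le]

lemma le_of_forall_rat_add_rightDeriv_mul_sub_le (hf : ConvexOn ℝ S f) {y v : ℝ}
    (hy : y ∈ interior S)
    (hv : ∀ q : ℚ, (q : ℝ) ∈ interior S → f q + derivWithin f (Ioi (q : ℝ)) q * (y - q) ≤ v) :
    f y ≤ v := by
  obtain ⟨l, hly, hlS⟩ := exists_Ioc_subset_of_mem_nhds (isOpen_interior.mem_nhds hy)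
    (exists_lt y)
  obtain ⟨a, hla, hay⟩ := exists_between hly
  set c := derivWithin f (Ioi a) a
  have hcont : ContinuousAt (fun x => f x + c * (y - x)) y :=
    (hf.continuousOn_interior.continuousAt (isOpen_interior.mem_nhds hy)).add (by fun_prop)
  -- Approaching `y` from the left keeps `y - q ≥ 0`, and there the right derivative at `q` is at
  -- least its value `c` at `a`.
  refine le_of_forall_pos_lt_add fun ε hε => ?_
  have hnear : ∀ᶠ x in 𝓝[<] y, f y - ε < f x + c * (y - x) :=
    nhdsWithin_le_nhds (hcont.tendsto.eventually_const_lt (by simpa using hε))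
  obtain ⟨b, hby, hbS⟩ := mem_nhdsLT_iff_exists_Ioo_subset.1 hnear
  obtain ⟨q, hq, hqy⟩ := exists_rat_btwn (max_lt hay hby)
  have hqS : (q : ℝ) ∈ interior S := hlS ⟨hla.trans_le ((le_max_left _ _).trans hq.le), hqy.le⟩
  have hcq : c ≤ derivWithin f (Ioi (q : ℝ)) q :=
    hf.monotoneOn_rightDeriv (hlS ⟨hla, hay.le⟩) hqS ((le_max_left _ _).trans hq.le)
  have hq_near : f y - ε < f q + c * (y - q) := hbS ⟨(le_max_right _ _).trans_lt hq, hqy⟩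
  nlinarith [hv q hqS, mul_le_mul_of_nonneg_right hcq (sub_pos.2 hqy).le]

end ConvexOn

section ConditionalExpectation

variable {Ω : Type*} {m m0 : MeasurableSpace Ω} {μ : Measure Ω} [IsFiniteMeasure μ]

lemma ae_condExp_eq_const_of_ae_eq_on {E : Type*} [NormedAddCommGroup E] [NormedSpace ℝ E]
    [CompleteSpace E] (hm : m ≤ m0) {f : Ω → E} (hf : Integrable f μ) {A : Set Ω}
    (hA : MeasurableSet[m] A) {c : E} (hfA : ∀ᵐ ω ∂μ, ω ∈ A → f ω = c) :
    ∀ᵐ ω ∂μ, ω ∈ A → μ[f | m] ω = c := by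
  have hzero : (f - fun _ => c) =ᵐ[μ.restrict A] 0 := by
    rw [EventuallyEq, ae_restrict_iff' (hm _ hA)]
    filter_upwards [hfA] with ω hω hωA using sub_eq_zero.2 (hω hωA)
  have h := condExp_ae_eq_restrict_zero hA hzero
  rw [EventuallyEq, ae_restrict_iff' (hm _ hA)] at h
  filter_upwards [h, condExp_sub hf (integrable_const c) m] with ω hω hsub hωA
  rw [hsub, condExp_const hm, Pi.sub_apply, Pi.zero_apply] at hω
  exact sub_eq_zero.1 (hω hωA)

variable {X : Ω → ℝ} {e : ℝ}

lemma ae_le_condExp_of_ae_le (hm : m ≤ m0) (hX : Integrable X μ) (he : ∀ᵐ ω ∂μ, e ≤ X ω) :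
    ∀ᵐ ω ∂μ, e ≤ μ[X | m] ω := by
  have h := condExp_mono (m := m) (integrable_const e) hX he
  rwa [condExp_const hm] at h

lemma ae_eq_of_condExp_le_of_ae_le (hm : m ≤ m0) (hX : Integrable X μ)
    (he : ∀ᵐ ω ∂μ, e ≤ X ω) : ∀ᵐ ω ∂μ, μ[X | m] ω ≤ e → X ω = e := by
  set A := {ω | μ[X | m] ω ≤ e}
  have hA : MeasurableSet[m] A :=
    measurableSet_le stronglyMeasurable_condExp.measurable measurable_const
  have hnonneg : 0 ≤ᵐ[μ.restrict A] fun ω => X ω - e :=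
    ae_restrict_of_ae (he.mono fun ω hω => sub_nonneg.2 hω)
  have hintegral : ∫ ω in A, (X ω - e) ∂μ = 0 := by
    refine le_antisymm ?_ (integral_nonneg_of_ae hnonneg)
    calc ∫ ω in A, (X ω - e) ∂μ = ∫ ω in A, (μ[X | m] ω - e) ∂μ := by
          rw [integral_sub hX.integrableOn (integrable_const e).integrableOn,
            integral_sub integrable_condExp.integrableOn (integrable_const e).integrableOn,
            setIntegral_condExp hm hX hA]
      _ ≤ 0 := setIntegral_nonpos (hm _ hA) fun ω hω => sub_nonpos.2 hω
  have hzero := (integral_eq_zero_iff_of_nonneg_ae hnonneg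
    (hX.sub (integrable_const e)).integrableOn).1 hintegral
  rw [EventuallyEq, ae_restrict_iff' (hm _ hA)] at hzero
  filter_upwards [hzero] with ω hω hωA using sub_eq_zero.1 (hω hωA)

lemma ae_eq_of_le_condExp_of_ae_le (hm : m ≤ m0) (hX : Integrable X μ)
    (he : ∀ᵐ ω ∂μ, X ω ≤ e) : ∀ᵐ ω ∂μ, e ≤ μ[X | m] ω → X ω = e := by
  have h := ae_eq_of_condExp_le_of_ae_le (m := m) (e := -e) hm hX.neg
    (he.mono fun ω hω => neg_le_neg hω)
  filter_upwards [h, condExp_neg X m] with ω hω hneg hle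
  rw [hneg] at hω
  exact neg_inj.1 (hω (neg_le_neg hle))

variable {S : Set ℝ}

lemma ae_exists_mem_le_condExp (hm : m ≤ m0) (hX : Integrable X μ) (hXS : ∀ᵐ ω ∂μ, X ω ∈ S) :
    ∀ᵐ ω ∂μ, ∃ s ∈ S, s ≤ μ[X | m] ω := by
  by_cases hS : BddBelow S
  swap
  · refine ae_of_all _ fun ω => ?_
    obtain ⟨s, hs, hlt⟩ := not_bddBelow_iff.1 hS (μ[X | m] ω)
    exact ⟨s, hs, hlt.le⟩
  have hinf : ∀ᵐ ω ∂μ, sInf S ≤ X ω := hXS.mono fun ω hω => csInf_le hS hω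
  filter_upwards [hXS, ae_le_condExp_of_ae_le hm hX hinf,
    ae_eq_of_condExp_le_of_ae_le hm hX hinf] with ω hωS hle heq
  rcases hle.lt_or_eq with hlt | hinf_eq
  · obtain ⟨s, hs, hslt⟩ := exists_lt_of_csInf_lt ⟨_, hωS⟩ hlt
    exact ⟨s, hs, hslt.le⟩
  · exact ⟨X ω, hωS, (heq hinf_eq.ge).trans_le hle⟩

lemma ae_exists_mem_condExp_le (hm : m ≤ m0) (hX : Integrable X μ) (hXS : ∀ᵐ ω ∂μ, X ω ∈ S) :
    ∀ᵐ ω ∂μ, ∃ s ∈ S, μ[X | m] ω ≤ s := by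
  have h := ae_exists_mem_le_condExp (m := m) (S := -S) hm hX.neg
    (hXS.mono fun ω hω => by simpa using hω)
  filter_upwards [h, condExp_neg X m] with ω ⟨s, hs, hle⟩ hneg
  rw [hneg, Pi.neg_apply] at hle
  exact ⟨-s, hs, le_neg.2 hle⟩

lemma ae_condExp_mem (hm : m ≤ m0) (hX : Integrable X μ) (hS : S.OrdConnected)
    (hXS : ∀ᵐ ω ∂μ, X ω ∈ S) : ∀ᵐ ω ∂μ, μ[X | m] ω ∈ S := by
  filter_upwards [ae_exists_mem_le_condExp hm hX hXS, ae_exists_mem_condExp_le hm hX hXS]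
    with ω ⟨a, ha, hle⟩ ⟨b, hb, hge⟩
  exact hS.out ha hb ⟨hle, hge⟩

lemma ae_affine_le_condExp_comp (hm : m ≤ m0) (hX : Integrable X μ) (hXS : ∀ᵐ ω ∂μ, X ω ∈ S)
    {f : ℝ → ℝ} (hfX : Integrable (f ∘ X) μ) {α β : ℝ} (hle : ∀ x ∈ S, α + β * x ≤ f x) :
    ∀ᵐ ω ∂μ, α + β * μ[X | m] ω ≤ μ[f ∘ X | m] ω := by
  have hmono := condExp_mono (m := m) ((integrable_const α).add (hX.smul β)) hfX
    (hXS.mono fun ω hω => hle _ hω)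
  filter_upwards [hmono, condExp_add (integrable_const α) (hX.smul β) m, condExp_smul β X m]
    with ω hω hadd hsmul
  rw [hadd, Pi.add_apply, hsmul, condExp_const hm] at hω
  exact hω

lemma ae_condExp_comp_eq_of_mem_sdiff_interior (hm : m ≤ m0) (hX : Integrable X μ)
    (hS : S.OrdConnected) (hXS : ∀ᵐ ω ∂μ, X ω ∈ S) {f : ℝ → ℝ} (hfX : Integrable (f ∘ X) μ)
    (he : e ∈ S \ interior S) : ∀ᵐ ω ∂μ, μ[X | m] ω = e → μ[f ∘ X | m] ω = f e := by
  have hXe : ∀ᵐ ω ∂μ, μ[X | m] ω = e → X ω = e := by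
    rcases hS.isLeast_or_isGreatest_of_notMem_interior he.1 he.2 with hleast | hgreatest
    · filter_upwards [ae_eq_of_condExp_le_of_ae_le hm hX (hXS.mono fun ω hω => hleast.2 hω)]
        with ω hω heq using hω heq.le
    · filter_upwards [ae_eq_of_le_condExp_of_ae_le hm hX (hXS.mono fun ω hω => hgreatest.2 hω)]
        with ω hω heq using hω heq.ge
  exact ae_condExp_eq_const_of_ae_eq_on hm hfX
    (measurableSet_eq_fun stronglyMeasurable_condExp.measurable measurable_const)
    (hXe.mono fun ω hω hA => congrArg f (hω hA))

theorem ConvexOn.map_condExp_le_real (hm : m ≤ m0) {f : ℝ → ℝ} (hf : ConvexOn ℝ S f)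
    (hXS : ∀ᵐ ω ∂μ, X ω ∈ S) (hX : Integrable X μ) (hfX : Integrable (f ∘ X) μ) :
    f ∘ μ[X | m] ≤ᵐ[μ] μ[f ∘ X | m] := by
  have hS := hf.1.ordConnected
  have hlines : ∀ᵐ ω ∂μ, ∀ q : ℚ, (q : ℝ) ∈ interior S →
      f q + derivWithin f (Ioi (q : ℝ)) q * (μ[X | m] ω - q) ≤ μ[f ∘ X | m] ω := by
    refine ae_all_iff.2 fun q => ?_
    by_cases hq : (q : ℝ) ∈ interior S
    · set c := derivWithin f (Ioi (q : ℝ)) q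
      filter_upwards [ae_affine_le_condExp_comp hm hX hXS hfX (α := f q - c * q) (β := c)
        fun x hx => (hf.add_rightDeriv_mul_sub_le hq hx).trans_eq' (by ring)] with ω hω _
      linarith
    · exact ae_of_all _ fun ω hq' => absurd hq' hq
  have hends : ∀ᵐ ω ∂μ, ∀ e ∈ S \ interior S, μ[X | m] ω = e → μ[f ∘ X | m] ω = f e :=
    (ae_ball_iff hS.countable_sdiff_interior).2 fun e he =>
      ae_condExp_comp_eq_of_mem_sdiff_interior hm hX hS hXS hfX he
  filter_upwards [ae_condExp_mem hm hX hS hXS, hlines, hends] with ω hmem hω hωe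
  by_cases hint : μ[X | m] ω ∈ interior S
  · exact hf.le_of_forall_rat_add_rightDeriv_mul_sub_le hint hω
  · exact (hωe _ ⟨hmem, hint⟩ rfl).ge

theorem ConcaveOn.condExp_map_le_real (hm : m ≤ m0) {f : ℝ → ℝ} (hf : ConcaveOn ℝ S f)
    (hXS : ∀ᵐ ω ∂μ, X ω ∈ S) (hX : Integrable X μ) (hfX : Integrable (f ∘ X) μ) :
    μ[f ∘ X | m] ≤ᵐ[μ] f ∘ μ[X | m] := by
  filter_upwards [hf.neg.map_condExp_le_real hm hXS hX hfX.neg, condExp_neg (f ∘ X) m]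
    with ω h hneg
  simp_all [Pi.neg_comp]

end ConditionalExpectation

theorem ae_condExp_le_iterate_and_iterate_mem {Ω : Type*} {m0 : MeasurableSpace Ω}
    {μ : Measure Ω} [IsFiniteMeasure μ] {ℱ : Filtration ℕ m0} {X : ℕ → Ω → ℝ} {S : Set ℝ}
    {g : ℝ → ℝ} (hgc : ConcaveOn ℝ S g) (hgm : MonotoneOn g S) (hg_le : ∀ x ∈ S, g x ≤ x)
    (hXS : ∀ t, ∀ᵐ ω ∂μ, X t ω ∈ S) (hX0 : StronglyMeasurable[ℱ 0] (X 0))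
    (hX : ∀ t, Integrable (X t) μ)
    (hgX : ∀ t, Integrable (g ∘ X t) μ) (hstep : ∀ t, μ[X (t + 1) | ℱ t] ≤ᵐ[μ] g ∘ X t)
    (t : ℕ) : ∀ᵐ ω ∂μ, μ[X t | ℱ 0] ω ≤ g^[t] (X 0 ω) ∧ g^[t] (X 0 ω) ∈ S := by
  have hS := hgc.1.ordConnected
  induction t with
  | zero =>
    rw [condExp_of_stronglyMeasurable (ℱ.le 0) hX0 (hX 0)]
    exact (hXS 0).mono fun ω hω => ⟨le_rfl, hω⟩
  | succ t ih =>
    have htower : μ[X (t + 1) | ℱ 0] ≤ᵐ[μ] μ[g ∘ X t | ℱ 0] :=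
      (condExp_condExp_of_le (ℱ.mono t.zero_le) (ℱ.le t)).symm.trans_le
        (condExp_mono integrable_condExp (hgX t) (hstep t))
    filter_upwards [ih, htower, hgc.condExp_map_le_real (ℱ.le 0) (hXS t) (hX t) (hgX t),
      ae_condExp_mem (ℱ.le 0) (hX t) hS (hXS t),
      ae_condExp_mem (ℱ.le 0) (hX (t + 1)) hS (hXS (t + 1))]
      with ω ⟨hle, hp⟩ htower hjensen hmem hmem_succ
    rw [Function.iterate_succ_apply']
    have hbound : μ[X (t + 1) | ℱ 0] ω ≤ g (g^[t] (X 0 ω)) :=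
      htower.trans (hjensen.trans (hgm hmem hp hle))
    exact ⟨hbound, hS.out hmem_succ hp ⟨hbound, hg_le _ hp⟩⟩

/-- Direct fixed-budget drift theorem, unlimited time (Theorem 2). -/
theorem direct_fixed_budget_drift_unlimited
    {Ω : Type*} {m0 : MeasurableSpace Ω} {μ : Measure Ω} [IsProbabilityMeasure μ]
    (ℱ : Filtration ℕ m0) (X : ℕ → Ω → ℝ) (S : Set ℝ) (h : ℝ → ℝ)
    (hmemS : ∀ t ω, X t ω ∈ S)
    (hconv : ConvexOn ℝ S h)
    (hnonneg : ∀ x ∈ S, 0 ≤ h x)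
    (hgreed : MonotoneOn (fun x => x - h x) S)
    (hadapted : Adapted ℱ X)
    (hint : ∀ t, Integrable (X t) μ)
    (hdrift : ∀ t, ∀ᵐ ω ∂μ,
      h (X t ω) ≤ (μ[fun ω' => X t ω' - X (t + 1) ω' | ℱ t]) ω) :
    ∀ t, ∀ᵐ ω ∂μ, (μ[X t | ℱ 0]) ω ≤ (fun x => x - h x)^[t] (X 0 ω) := by
  set g : ℝ → ℝ := fun x => x - h x
  have hXm : ∀ t, Measurable (X t) := fun t => (hadapted t).mono (ℱ.le t) le_rfl
  have hstep : ∀ t, μ[X (t + 1) | ℱ t] ≤ᵐ[μ] g ∘ X t := fun t => by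
    filter_upwards [hdrift t, condExp_sub (hint t) (hint (t + 1)) (ℱ t)] with ω hω hsub
    rw [show (fun ω' => X t ω' - X (t + 1) ω') = X t - X (t + 1) from rfl, hsub, Pi.sub_apply,
      condExp_of_stronglyMeasurable (ℱ.le t) (hadapted t).stronglyMeasurable (hint t)] at hω
    simp only [Function.comp_apply, g]
    linarith
  have hgX : ∀ t, Integrable (g ∘ X t) μ := fun t => by
    have hhX_meas : Measurable (h ∘ X t) := by
      simpa [g, Function.comp_def, Pi.sub_def] using (hXm t).sub (hgreed.measurable_comp (hXm t) (hmemS t))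
    have hhX : Integrable (h ∘ X t) μ :=
      (integrable_condExp (m := ℱ t) (f := fun ω' => X t ω' - X (t + 1) ω')).mono'
        hhX_meas.aestronglyMeasurable <| (hdrift t).mono fun ω hω => by
          rwa [Function.comp_apply, Real.norm_of_nonneg (hnonneg _ (hmemS t ω))]
    exact (hint t).sub hhX
  intro t
  filter_upwards [ae_condExp_le_iterate_and_iterate_mem ((concaveOn_id hconv.1).sub hconv)
    hgreed (fun x hx => sub_le_self _ (hnonneg x hx)) (fun t => ae_of_all _ (hmemS t))
    (hadapted 0).stronglyMeasurable hint hgX hstep t] with ω hω using hω.1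
end

section
/- Let X ∈ {1, ..., m} have distribution P(X = i) = (1/2)^i for 1 ≤ i < m and P(X = m) = (1/2)^{m-1}, and let 0 ≤ η ≤ 1. Then E[e^{-η X}] ≤ 1 + (1/2)^{m-1} η - 2η + C η² for some absolute constant C, i.e., E[e^{-η X}] = 1 + ((1/2)^{m-1} - 2)η + O(η²) uniformly in m. -/
/-!
Since `e^{-t} ≤ 1 - t + t²` for `t ≥ 0`, the mgf is at most `1 - η E[X] + η² E[X²]`. For the
truncated geometric law of `X` the first moment is exactly `2 - (1/2)^{m-1}` and the second is
`6 - (2m + 3)(1/2)^{m-1} ≤ 6`, so `C = 6` works.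
-/

open MeasureTheory Finset

theorem Real.exp_neg_le_one_sub_add_sq {t : ℝ} (ht : 0 ≤ t) : Real.exp (-t) ≤ 1 - t + t ^ 2 := by
  rw [Real.exp_neg, inv_le_iff_one_le_mul₀ (Real.exp_pos t)]
  nlinarith [Real.add_one_le_exp t, sq_nonneg t, mul_nonneg ht (sq_nonneg (t - 1))]

theorem MeasureTheory.integral_comp_eq_sum_of_forall_mem {Ω α : Type*} [MeasurableSpace Ω]
    [MeasurableSpace α] [MeasurableSingletonClass α] {μ : Measure Ω} [IsFiniteMeasure μ]
    {X : Ω → α} (hX : Measurable X) {s : Finset α} (hs : ∀ ω, X ω ∈ s) (f : α → ℝ) :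
    ∫ ω, f (X ω) ∂μ = ∑ i ∈ s, μ.real {ω | X ω = i} * f i := by
  have hfX : (fun ω => f (X ω)) = fun ω => ∑ i ∈ s, {ω | X ω = i}.indicator (fun _ => f i) ω := by
    ext ω
    rw [Finset.sum_eq_single_of_mem (X ω) (hs ω) fun i _ hi => ?_]
    · simp
    · simp [Ne.symm hi]
  have hmeas (i : α) : MeasurableSet {ω | X ω = i} := hX (measurableSet_singleton i)
  rw [hfX, integral_finsetSum _ fun i _ => (integrable_const (f i)).indicator (hmeas i)]
  simp only [integral_indicator_const _ (hmeas _), smul_eq_mul]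

/-- Expectation of `f X` for the law of the theorem with `m = n + 1`:
`P(X = i) = 2⁻ⁱ` for `1 ≤ i ≤ n` and `P(X = n + 1) = 2⁻ⁿ`. -/
noncomputable def truncGeomExpect (n : ℕ) (f : ℕ → ℝ) : ℝ :=
  ∑ i ∈ Icc 1 n, (1 / 2 : ℝ) ^ i * f i + (1 / 2 : ℝ) ^ n * f (n + 1)

theorem truncGeomExpect_succ (n : ℕ) (f : ℕ → ℝ) :
    truncGeomExpect (n + 1) f =
      truncGeomExpect n f + (1 / 2 : ℝ) ^ (n + 1) * (f (n + 2) - f (n + 1)) := by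
  unfold truncGeomExpect
  rw [Finset.sum_Icc_succ_top (by omega)]
  ring

theorem truncGeomExpect_quadratic (n : ℕ) (a b c : ℝ) :
    truncGeomExpect n (fun i => a - b * i + c * i ^ 2) =
      a - b * (2 - (1 / 2 : ℝ) ^ n) + c * (6 - (2 * n + 5) * (1 / 2 : ℝ) ^ n) := by
  induction n with
  | zero => norm_num [truncGeomExpect]
  | succ n ih => rw [truncGeomExpect_succ, ih]; push_cast; ring

theorem truncGeomExpect_mono {n : ℕ} {f g : ℕ → ℝ} (hfg : ∀ i, f i ≤ g i) :
    truncGeomExpect n f ≤ truncGeomExpect n g := by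
  unfold truncGeomExpect
  gcongr with i
  · exact hfg i
  · exact hfg _

theorem truncGeomExpect_exp_neg_mul_le (n : ℕ) {η : ℝ} (hη : 0 ≤ η) :
    truncGeomExpect n (fun i => Real.exp (-η * i)) ≤
      1 + (1 / 2 : ℝ) ^ n * η - 2 * η + 6 * η ^ 2 := by
  calc truncGeomExpect n (fun i => Real.exp (-η * i))
      ≤ truncGeomExpect n (fun i => 1 - η * i + η ^ 2 * i ^ 2) :=
        truncGeomExpect_mono fun i => by
          simpa [neg_mul, mul_pow] using Real.exp_neg_le_one_sub_add_sq (by positivity : 0 ≤ η * i)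
    _ = 1 - η * (2 - (1 / 2 : ℝ) ^ n) + η ^ 2 * (6 - (2 * n + 5) * (1 / 2 : ℝ) ^ n) :=
        truncGeomExpect_quadratic n _ _ _
    _ ≤ 1 + (1 / 2 : ℝ) ^ n * η - 2 * η + 6 * η ^ 2 := by
        have : 0 ≤ η ^ 2 * ((2 * n + 5) * (1 / 2 : ℝ) ^ n) := by positivity
        linarith

theorem integral_comp_eq_truncGeomExpect {Ω : Type*} [MeasurableSpace Ω] {μ : Measure Ω}
    [IsFiniteMeasure μ] {X : Ω → ℕ} (hX : Measurable X) {n : ℕ}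
    (hrange : ∀ ω, 1 ≤ X ω ∧ X ω ≤ n + 1)
    (hprob : ∀ i, 1 ≤ i → i < n + 1 → μ {ω | X ω = i} = ENNReal.ofReal ((1 / 2 : ℝ) ^ i))
    (hlast : μ {ω | X ω = n + 1} = ENNReal.ofReal ((1 / 2 : ℝ) ^ n)) (f : ℕ → ℝ) :
    ∫ ω, f (X ω) ∂μ = truncGeomExpect n f := by
  rw [integral_comp_eq_sum_of_forall_mem hX (s := Icc 1 (n + 1))
    (fun ω => Finset.mem_Icc.2 (hrange ω)), Finset.sum_Icc_succ_top (by omega), truncGeomExpect]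
  congr 1
  · refine Finset.sum_congr rfl fun i hi => ?_
    rw [Finset.mem_Icc] at hi
    rw [measureReal_def, hprob i hi.1 (by omega), ENNReal.toReal_ofReal (by positivity)]
  · rw [measureReal_def, hlast, ENNReal.toReal_ofReal (by positivity)]

/-- Estimate for the mgf of the negated conditional fitness gain of the (1+1) EA
on LeadingOnes: `E[e^{-ηX}] ≤ 1 + (1/2)^{m-1}·η - 2η + C·η²` for an absolute
constant `C`, uniformly in `m` and `0 ≤ η ≤ 1`. -/
theorem mgf_neg_free_rider_gain_estimate :
    ∃ C : ℝ, ∀ (m : ℕ), 1 ≤ m → ∀ (η : ℝ), 0 ≤ η → η ≤ 1 →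
      ∀ (Ω : Type) (m0 : MeasurableSpace Ω) (μ : Measure Ω),
        IsProbabilityMeasure μ →
        ∀ (X : Ω → ℕ), Measurable X →
        (∀ ω, 1 ≤ X ω ∧ X ω ≤ m) →
        (∀ i : ℕ, 1 ≤ i → i < m →
          μ {ω | X ω = i} = ENNReal.ofReal ((1 / 2 : ℝ) ^ i)) →
        μ {ω | X ω = m} = ENNReal.ofReal ((1 / 2 : ℝ) ^ (m - 1)) →
        ∫ ω, Real.exp (-η * (X ω : ℝ)) ∂μ ≤
          1 + (1 / 2 : ℝ) ^ (m - 1) * η - 2 * η + C * η ^ 2 := by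
  refine ⟨6, fun m hm η hη _ Ω _ μ _ X hX hrange hprob hlast => ?_⟩
  obtain ⟨n, rfl⟩ : ∃ n, m = n + 1 := ⟨m - 1, by omega⟩
  rw [Nat.add_sub_cancel] at hlast ⊢
  rw [integral_comp_eq_truncGeomExpect hX hrange hprob hlast (fun i => Real.exp (-η * i))]
  exact truncGeomExpect_exp_neg_mul_le n hη
end

section
/- For the (1+1) EA on LeadingOnes with n bits, let X_t = n - LeadingOnes(x_t) be the fitness distance at time t. Then the expected one-step drift satisfies E[X_t - X_{t+1} | X_t] = (2 - 2^{1 - X_t})·(1 - 1/n)^{n - X_t} / n whenever X_t ≥ 1. -/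
open Finset

/-- Number of leading ones of a bit string. -/
def leadingOnes (n : ℕ) (x : Fin n → Bool) : ℕ :=
  (Finset.univ.filter (fun i : Fin n => ∀ j ≤ i, x j = true)).card

/-- Probability that standard bit mutation (each bit flips independently with
probability `1/n`) turns `x` into `y`. -/
noncomputable def mutProb (n : ℕ) (x y : Fin n → Bool) : ℝ :=
  ∏ i : Fin n, if y i = x i then 1 - 1 / (n : ℝ) else 1 / (n : ℝ)

/-- One-step transition probability of the (1+1) EA with fitness `f`:
the offspring is accepted iff its fitness is at least that of the parent. -/
noncomputable def eaStep (n : ℕ) (f : (Fin n → Bool) → ℕ) (x z : Fin n → Bool) : ℝ :=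
  (if f x ≤ f z then mutProb n x z else 0) +
    (if z = x then ∑ y ∈ Finset.univ.filter (fun y => f y < f x), mutProb n x y else 0)

/-- Distribution of the current search point of the (1+1) EA after `t` iterations,
starting from the uniform distribution. -/
noncomputable def eaDist (n : ℕ) (f : (Fin n → Bool) → ℕ) : ℕ → (Fin n → Bool) → ℝ
  | 0, _ => (1 / 2 : ℝ) ^ n
  | t + 1, z => ∑ x : Fin n → Bool, eaDist n f t x * eaStep n f x z


section LOChar
variable {n : ℕ}

lemma card_filter_lt (k : ℕ) (hk : k ≤ n) :
    (Finset.univ.filter (fun i : Fin n => (i : ℕ) < k)).card = k := by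
  have h : (Finset.univ.filter (fun i : Fin n => (i : ℕ) < k))
      = Finset.map (Fin.castLEEmb hk) Finset.univ := by
    ext i
    simp only [mem_filter, mem_univ, true_and, mem_map]
    constructor
    · intro h; exact ⟨⟨i, h⟩, rfl⟩
    · rintro ⟨j, rfl⟩; exact j.isLt
  rw [h, Finset.card_map, Finset.card_univ, Fintype.card_fin]

lemma lo_eq (x : Fin n → Bool) (k : ℕ) (hk : k ≤ n)
    (h1 : ∀ i : Fin n, (i : ℕ) < k → x i = true)
    (h2 : ∀ h : k < n, x ⟨k, h⟩ = false) :
    leadingOnes n x = k := by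
  unfold leadingOnes
  have h : (Finset.univ.filter (fun i : Fin n => ∀ j ≤ i, x j = true))
      = Finset.univ.filter (fun i : Fin n => (i : ℕ) < k) := by
    ext i
    simp only [mem_filter, mem_univ, true_and]
    constructor
    · intro h
      by_contra hlt
      push_neg at hlt
      have hkn : k < n := lt_of_le_of_lt hlt i.isLt
      have := h ⟨k, hkn⟩ (by exact hlt)
      rw [h2 hkn] at this
      exact Bool.false_ne_true this
    · intro hik j hj
      exact h1 j (lt_of_le_of_lt hj hik)
  rw [h, card_filter_lt k hk]

lemma lo_char (x : Fin n → Bool) :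
    leadingOnes n x ≤ n ∧ (∀ i : Fin n, (i : ℕ) < leadingOnes n x → x i = true) ∧
      (∀ h : leadingOnes n x < n, x ⟨leadingOnes n x, h⟩ = false) := by
  by_cases h : ∃ j : Fin n, x j = false
  · have hP : ∃ j : ℕ, ∃ hj : j < n, x ⟨j, hj⟩ = false := by
      obtain ⟨j, hj⟩ := h
      exact ⟨j.val, j.isLt, by simpa using hj⟩
    set k := Nat.find hP with hkdef
    obtain ⟨hkn, hfalse⟩ := Nat.find_spec hP
    have h1 : ∀ i : Fin n, (i : ℕ) < k → x i = true := by
      intro i hi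
      by_contra hf
      exact Nat.find_min hP hi ⟨i.isLt, by simp_all⟩
    have hlo : leadingOnes n x = k := lo_eq x k hkn.le h1 (fun _ => hfalse)
    rw [hlo]
    exact ⟨hkn.le, h1, fun _ => hfalse⟩
  · push_neg at h
    have h1 : ∀ i : Fin n, x i = true := by
      intro i; cases hxi : x i with
      | false => exact absurd hxi (h i)
      | true => rfl
    have hlo : leadingOnes n x = n :=
      lo_eq x n le_rfl (fun i _ => h1 i) (fun h' => absurd h' (lt_irrefl n))
    rw [hlo]
    exact ⟨le_rfl, fun i _ => h1 i, fun h' => absurd h' (lt_irrefl n)⟩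

lemma lo_le (x : Fin n → Bool) : leadingOnes n x ≤ n := (lo_char x).1

lemma lo_true (x : Fin n → Bool) (i : Fin n) (h : (i : ℕ) < leadingOnes n x) : x i = true :=
  (lo_char x).2.1 i h

lemma lo_false (x : Fin n → Bool) (h : leadingOnes n x < n) :
    x ⟨leadingOnes n x, h⟩ = false := (lo_char x).2.2 h

lemma lt_lo_iff (x : Fin n → Bool) (j : ℕ) (hj : j < n) :
    j < leadingOnes n x ↔ ∀ i : Fin n, (i : ℕ) ≤ j → x i = true := by
  constructor
  · intro h i hi
    exact lo_true x i (lt_of_le_of_lt hi h)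
  · intro h
    by_contra hle
    push_neg at hle
    have hlt : leadingOnes n x < n := lt_of_le_of_lt hle hj
    have := h ⟨leadingOnes n x, hlt⟩ hle
    rw [lo_false x hlt] at this
    exact Bool.false_ne_true this

lemma lo_eq_n (x : Fin n → Bool) (h : leadingOnes n x = n) : ∀ i, x i = true := by
  intro i; exact lo_true x i (by rw [h]; exact i.isLt)

end LOChar


section Inv
variable {n : ℕ}

/-- XOR with a fixed mask, as an equivalence. -/
def xorEquiv (d : Fin n → Bool) : (Fin n → Bool) ≃ (Fin n → Bool) where
  toFun x := fun i => xor (x i) (d i)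
  invFun x := fun i => xor (x i) (d i)
  left_inv x := by funext i; cases h1 : x i <;> cases h2 : d i <;> simp [h1, h2]
  right_inv x := by funext i; cases h1 : x i <;> cases h2 : d i <;> simp [h1, h2]

lemma mutProb_xor (d x y : Fin n → Bool) :
    mutProb n (xorEquiv d x) (xorEquiv d y) = mutProb n x y := by
  unfold mutProb
  apply Finset.prod_congr rfl
  intro i _
  exact if_congr (by show xor (y i) (d i) = xor (x i) (d i) ↔ y i = x i
                     cases y i <;> cases x i <;> cases d i <;> simp) rfl rfl

lemma lo_xor (x d : Fin n → Bool) (hd : ∀ i : Fin n, (i : ℕ) ≤ leadingOnes n x → d i = false) :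
    leadingOnes n (xorEquiv d x) = leadingOnes n x := by
  apply lo_eq
  · exact lo_le x
  · intro i hi
    show xor (x i) (d i) = true
    rw [hd i hi.le, lo_true x i hi]; rfl
  · intro h
    show xor (x ⟨leadingOnes n x, h⟩) (d ⟨leadingOnes n x, h⟩) = false
    rw [hd ⟨leadingOnes n x, h⟩ le_rfl, lo_false x h]; rfl

lemma lo_xor_gt {x d : Fin n → Bool} {l : ℕ} (hl : l < n)
    (hd : ∀ i : Fin n, (i : ℕ) ≤ l → d i = false) (hx : l < leadingOnes n x) :
    l < leadingOnes n (xorEquiv d x) := by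
  rw [lt_lo_iff _ l hl] at hx ⊢
  intro i hi
  show xor (x i) (d i) = true
  rw [hd i hi, hx i hi]; rfl

/-- `eaDist` is constant on fitness levels of LeadingOnes. -/
lemma eaDist_const (t : ℕ) : ∀ z z' : Fin n → Bool, leadingOnes n z = leadingOnes n z' →
    eaDist n (leadingOnes n) t z = eaDist n (leadingOnes n) t z' := by
  induction t with
  | zero => intro z z' _; rfl
  | succ t ih =>
    intro z z' hzz
    by_cases hne : z = z'
    · rw [hne]
    have hln : leadingOnes n z < n := by
      by_contra hge
      push_neg at hge
      have h1 : leadingOnes n z = n := le_antisymm (lo_le z) hge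
      have h2 : leadingOnes n z' = n := hzz ▸ h1
      exact hne (funext fun i => (lo_eq_n z h1 i).trans (lo_eq_n z' h2 i).symm)
    set l := leadingOnes n z with hl
    set d : Fin n → Bool := fun i => xor (z i) (z' i) with hdd
    have hd : ∀ i : Fin n, (i : ℕ) ≤ l → d i = false := by
      intro i hi
      rcases lt_or_eq_of_le hi with hi' | hi'
      · show xor (z i) (z' i) = false
        rw [lo_true z i hi', lo_true z' i (hzz ▸ hi')]; rfl
      · have hieq : i = ⟨l, hln⟩ := Fin.ext hi'
        show xor (z i) (z' i) = false
        rw [hieq]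
        have hz : z ⟨l, hln⟩ = false := lo_false z hln
        have hz' : z' ⟨l, hln⟩ = false := by
          have h2 : leadingOnes n z' < n := hzz ▸ hln
          have h3 := lo_false z' h2
          have h4 : (⟨leadingOnes n z', h2⟩ : Fin n) = ⟨l, hln⟩ := Fin.ext hzz.symm
          rwa [h4] at h3
        rw [hz, hz']; rfl
    have hdz : xorEquiv d z = z' := by
      funext i
      show xor (z i) (xor (z i) (z' i)) = z' i
      cases z i <;> cases z' i <;> rfl
    -- main reindexing
    show (∑ x : Fin n → Bool, eaDist n (leadingOnes n) t x * eaStep n (leadingOnes n) x z)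
        = ∑ x : Fin n → Bool, eaDist n (leadingOnes n) t x * eaStep n (leadingOnes n) x z'
    apply Fintype.sum_equiv (xorEquiv d)
    intro x
    by_cases hx : leadingOnes n x ≤ l
    · have hdx : ∀ i : Fin n, (i : ℕ) ≤ leadingOnes n x → d i = false :=
        fun i hi => hd i (le_trans hi hx)
      have hlx : leadingOnes n (xorEquiv d x) = leadingOnes n x := lo_xor x d hdx
      have hP : eaDist n (leadingOnes n) t x = eaDist n (leadingOnes n) t (xorEquiv d x) :=
        ih x (xorEquiv d x) hlx.symm
      rw [← hP]
      congr 1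
      -- eaStep equality
      unfold eaStep
      congr 1
      · rw [hlx, ← hzz, ← hl]
        by_cases hc : leadingOnes n x ≤ l
        · rw [if_pos hc, if_pos hc, ← hdz, mutProb_xor]
        · rw [if_neg hc, if_neg hc]
      · by_cases hzx : z = x
        · have hzx' : z' = xorEquiv d x := by rw [← hdz, hzx]
          rw [if_pos hzx, if_pos hzx']
          subst hzx
          -- sum over worse y
          rw [Finset.sum_filter, Finset.sum_filter]
          apply Fintype.sum_equiv (xorEquiv d)
          intro y
          have hlt_iff : leadingOnes n (xorEquiv d y) < leadingOnes n (xorEquiv d z)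
              ↔ leadingOnes n y < leadingOnes n z := by
            rw [lo_xor z d (fun i hi => hd i hi)]
            by_cases hy : leadingOnes n y ≤ l
            · rw [lo_xor y d (fun i hi => hd i (le_trans hi hy))]
            · push_neg at hy
              have h1 := lo_xor_gt hln hd hy
              constructor
              · intro hc; omega
              · intro hc; omega
          by_cases hc : leadingOnes n y < leadingOnes n z
          · rw [if_pos hc, if_pos (hlt_iff.mpr hc), mutProb_xor]
          · rw [if_neg hc, if_neg (fun h => hc (hlt_iff.mp h))]
        · have hzx' : ¬ z' = xorEquiv d x := by
            intro h
            apply hzx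
            rw [← hdz] at h
            exact (xorEquiv d).injective h
          rw [if_neg hzx, if_neg hzx']
    · push_neg at hx
      have hx' : l < leadingOnes n (xorEquiv d x) := lo_xor_gt hln hd hx
      have e1 : eaStep n (leadingOnes n) x z = 0 := by
        unfold eaStep
        rw [if_neg (by rw [← hl]; omega), if_neg (by
          intro h
          rw [h] at hl
          omega)]
        ring
      have e2 : eaStep n (leadingOnes n) (xorEquiv d x) z' = 0 := by
        unfold eaStep
        rw [if_neg (by rw [← hzz]; omega), if_neg (by
          intro h
          have h5 : leadingOnes n z' = leadingOnes n (xorEquiv d x) := by rw [h]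
          omega)]
        ring
      rw [e1, e2, mul_zero, mul_zero]

section Sums
variable {n : ℕ}

lemma sum_bool_prod (w : Fin n → Bool → ℝ) :
    ∑ x : Fin n → Bool, ∏ i, w i (x i) = ∏ i, (w i true + w i false) := by
  rw [← Fintype.prod_sum]
  exact Finset.prod_congr rfl (fun i _ => by rw [Fintype.sum_bool])

lemma prod_pattern (a b c : ℝ) {k j n : ℕ} (hkj : k ≤ j) (hjn : j < n) :
    (∏ i ∈ Finset.range n, (if i < k then a else if i = k then b else if i ≤ j then c else 2))
      = a ^ k * b * c ^ (j - k) * 2 ^ (n - 1 - j) := by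
  set f : ℕ → ℝ := fun i => if i < k then a else if i = k then b else if i ≤ j then c else 2
    with hf
  rw [Finset.range_eq_Ico, ← Finset.prod_Ico_consecutive f (Nat.zero_le (j+1)) (by omega),
    ← Finset.prod_Ico_consecutive f (Nat.zero_le k) (by omega : k ≤ j + 1),
    Finset.prod_eq_prod_Ico_succ_bot (by omega : k < j + 1) f]
  have h1 : ∏ i ∈ Finset.Ico 0 k, f i = a ^ k := by
    rw [Finset.prod_congr rfl (fun i hi => ?_), Finset.prod_const, Nat.card_Ico, Nat.sub_zero]
    have : i < k := (Finset.mem_Ico.mp hi).2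
    simp [hf, this]
  have h2 : f k = b := by simp [hf]
  have h3 : ∏ i ∈ Finset.Ico (k+1) (j+1), f i = c ^ (j - k) := by
    rw [Finset.prod_congr rfl (fun i hi => ?_), Finset.prod_const, Nat.card_Ico]
    · congr 1; omega
    · obtain ⟨hi1, hi2⟩ := Finset.mem_Ico.mp hi
      have e1 : ¬ i < k := by omega
      have e2 : ¬ i = k := by omega
      have e3 : i ≤ j := by omega
      simp [hf, e1, e2, e3]
  have h4 : ∏ i ∈ Finset.Ico (j+1) n, f i = 2 ^ (n - 1 - j) := by
    rw [Finset.prod_congr rfl (fun i hi => ?_), Finset.prod_const, Nat.card_Ico]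
    · congr 1; omega
    · obtain ⟨hi1, hi2⟩ := Finset.mem_Ico.mp hi
      have e1 : ¬ i < k := by omega
      have e2 : ¬ i = k := by omega
      have e3 : ¬ i ≤ j := by omega
      simp [hf, e1, e2, e3]
  rw [h1, h2, h3, h4]
  ring

lemma fiber_sum (u : Bool → ℝ) {k j : ℕ} (hkj : k ≤ j) (hjn : j < n) :
    ∑ x : Fin n → Bool, (if leadingOnes n x = k then
        ∏ i : Fin n, (if (i : ℕ) ≤ j then u (x i) else 1) else 0)
      = u true ^ k * u false * (u true + u false) ^ (j - k) * 2 ^ (n - 1 - j) := by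
  have hkn : k < n := lt_of_le_of_lt hkj hjn
  set v : Fin n → Bool → ℝ := fun i b =>
    if ((i : ℕ) < k ∧ b = false) ∨ ((i : ℕ) = k ∧ b = true) then 0
    else if (i : ℕ) ≤ j then u b else 1 with hv
  have hpt : ∀ x : Fin n → Bool,
      (if leadingOnes n x = k then ∏ i : Fin n, (if (i : ℕ) ≤ j then u (x i) else 1) else 0)
        = ∏ i : Fin n, v i (x i) := by
    intro x
    by_cases hx : leadingOnes n x = k
    · rw [if_pos hx]
      apply Finset.prod_congr rfl
      intro i _
      simp only [hv]
      rcases lt_trichotomy (i : ℕ) k with hik | hik | hik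
      · have hxi : x i = true := lo_true x i (by omega)
        have hc : ¬((i:ℕ) < k ∧ x i = false ∨ (i:ℕ) = k ∧ x i = true) := by
          rintro (⟨-, hb⟩ | ⟨h2, -⟩)
          · rw [hxi] at hb; simp at hb
          · omega
        rw [if_neg hc]
      · have hlt : leadingOnes n x < n := by omega
        have hieq : i = ⟨k, hkn⟩ := Fin.ext hik
        have h5 := lo_false x hlt
        have h6 : (⟨leadingOnes n x, hlt⟩ : Fin n) = ⟨k, hkn⟩ := Fin.ext hx
        rw [h6] at h5
        have hxi : x i = false := by rw [hieq]; exact h5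
        have hc : ¬((i:ℕ) < k ∧ x i = false ∨ (i:ℕ) = k ∧ x i = true) := by
          rintro (⟨h2, -⟩ | ⟨-, hb⟩)
          · omega
          · rw [hxi] at hb; simp at hb
        rw [if_neg hc]
      · have hc : ¬((i:ℕ) < k ∧ x i = false ∨ (i:ℕ) = k ∧ x i = true) := by
          rintro (⟨h2, -⟩ | ⟨h2, -⟩) <;> omega
        rw [if_neg hc]
    · rw [if_neg hx]
      symm
      by_cases h1 : ∀ i : Fin n, (i : ℕ) < k → x i = true
      · by_cases h2 : x ⟨k, hkn⟩ = false
        · exact absurd (lo_eq x k hkn.le h1 (fun _ => h2)) hx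
        · have h2' : x ⟨k, hkn⟩ = true := by revert h2; cases x ⟨k, hkn⟩ <;> simp
          apply Finset.prod_eq_zero (Finset.mem_univ (⟨k, hkn⟩ : Fin n))
          rw [h2']
          simp [hv]
      · push_neg at h1
        obtain ⟨i0, hi0, hxi0⟩ := h1
        have hxi0' : x i0 = false := by revert hxi0; cases x i0 <;> simp
        apply Finset.prod_eq_zero (Finset.mem_univ i0)
        rw [hxi0']
        simp [hv, hi0]
  rw [Finset.sum_congr rfl (fun x _ => hpt x), sum_bool_prod]
  have hvi : ∀ i : Fin n, v i true + v i false =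
      (if (i:ℕ) < k then u true else if (i:ℕ) = k then u false
        else if (i:ℕ) ≤ j then u true + u false else 2) := by
    intro i
    have ht : v i true = if (i:ℕ) = k then 0 else if (i:ℕ) ≤ j then u true else 1 := by
      simp [hv]
    have hf : v i false = if (i:ℕ) < k then 0 else if (i:ℕ) ≤ j then u false else 1 := by
      simp [hv]
    rw [ht, hf]
    split_ifs <;> first | rfl | (exfalso; omega) | simp | norm_num
  rw [Finset.prod_congr rfl (fun i _ => hvi i),
    Fin.prod_univ_eq_prod_range (fun i => if i < k then u true else if i = k then u false
      else if i ≤ j then u true + u false else 2) n,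
    prod_pattern _ _ _ hkj hjn]

lemma sum_mut_prefix (x : Fin n → Bool) {j : ℕ} (hj : j < n) :
    ∑ z : Fin n → Bool, (if j < leadingOnes n z then mutProb n x z else 0)
      = ∏ i : Fin n, (if (i : ℕ) ≤ j then
          (if x i = true then 1 - 1 / (n : ℝ) else 1 / (n : ℝ)) else 1) := by
  set w : Fin n → Bool → ℝ := fun i b =>
    if (i : ℕ) ≤ j ∧ b = false then 0
    else if b = x i then 1 - 1 / (n : ℝ) else 1 / (n : ℝ) with hw
  have hpt : ∀ z : Fin n → Bool,
      (if j < leadingOnes n z then mutProb n x z else 0) = ∏ i : Fin n, w i (z i) := by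
    intro z
    by_cases hz : j < leadingOnes n z
    · rw [if_pos hz]
      unfold mutProb
      apply Finset.prod_congr rfl
      intro i _
      by_cases hij : (i : ℕ) ≤ j
      · have : z i = true := lo_true z i (by omega)
        simp [hw, hij, this]
      · simp [hw, hij]
    · rw [if_neg hz]
      rw [lt_lo_iff z j hj] at hz
      push_neg at hz
      obtain ⟨i0, hi0, hzi0⟩ := hz
      have hzi0' : z i0 = false := by revert hzi0; cases z i0 <;> simp
      symm
      apply Finset.prod_eq_zero (Finset.mem_univ i0)
      rw [hzi0']
      simp [hw, hi0]
  rw [Finset.sum_congr rfl (fun z _ => hpt z), sum_bool_prod]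
  apply Finset.prod_congr rfl
  intro i _
  by_cases hij : (i : ℕ) ≤ j
  · cases h : x i <;> simp [hw, hij, h]
  · cases h : x i <;> simp [hw, hij, h] <;> ring

end Sums

section Main
variable {n : ℕ}

lemma geo_sum {k : ℕ} (hk : k < n) :
    ∑ j ∈ Finset.Ico k n, (2:ℝ)^(n-1-j) = 2^(n-k) - 1 := by
  have h : ∑ j ∈ Finset.Ico k n, (2:ℝ)^(n-1-j) = ∑ r ∈ Finset.range (n-k), (2:ℝ)^r := by
    apply Finset.sum_nbij' (fun j => n-1-j) (fun r => n-1-r)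
    · intro a ha; simp only [Finset.mem_Ico, Finset.mem_range] at *; omega
    · intro a ha; simp only [Finset.mem_Ico, Finset.mem_range] at *; omega
    · intro a ha; simp only [Finset.mem_Ico] at *; omega
    · intro a ha; simp only [Finset.mem_range] at *; omega
    · intro a ha; rfl
  rw [h, geom_sum_eq (by norm_num : (2:ℝ) ≠ 1)]
  norm_num

lemma D_eq (x : Fin n → Bool) {k : ℕ} (hx : leadingOnes n x = k) (hk : k < n) :
    ∑ z : Fin n → Bool,
        eaStep n (leadingOnes n) x z * ((leadingOnes n z : ℝ) - (leadingOnes n x : ℝ))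
      = ∑ j ∈ Finset.Ico k n, ∏ i : Fin n,
          (if (i : ℕ) ≤ j then (if x i = true then 1 - 1/(n:ℝ) else 1/(n:ℝ)) else 1) := by
  have step1 : ∀ z : Fin n → Bool,
      eaStep n (leadingOnes n) x z * ((leadingOnes n z : ℝ) - (leadingOnes n x : ℝ))
        = (∑ j ∈ Finset.Ico k n, (if j < leadingOnes n z then mutProb n x z else 0))
          + (if z = x then
              (∑ y ∈ Finset.univ.filter (fun y => leadingOnes n y < leadingOnes n x),
                mutProb n x y) * ((leadingOnes n z : ℝ) - (leadingOnes n x : ℝ)) else 0) := by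
    intro z
    unfold eaStep
    rw [add_mul]
    congr 1
    · have hfil : (Finset.Ico k n).filter (fun j => j < leadingOnes n z)
          = Finset.Ico k (leadingOnes n z) := by
        ext j
        simp only [Finset.mem_filter, Finset.mem_Ico]
        have := lo_le z
        omega
      have hsum : (∑ j ∈ Finset.Ico k n, if j < leadingOnes n z then mutProb n x z else 0)
          = ((leadingOnes n z - k : ℕ) : ℝ) * mutProb n x z := by
        rw [← Finset.sum_filter, hfil, Finset.sum_const, Nat.card_Ico, nsmul_eq_mul]
      rw [hsum, hx]
      by_cases hz : k ≤ leadingOnes n z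
      · rw [if_pos hz, Nat.cast_sub hz]
        ring
      · rw [if_neg hz]
        have h0 : leadingOnes n z - k = 0 := by omega
        rw [h0]
        norm_num
    · split_ifs <;> ring
  rw [Finset.sum_congr rfl (fun z _ => step1 z), Finset.sum_add_distrib]
  have h2 : (∑ z : Fin n → Bool, if z = x then
      (∑ y ∈ Finset.univ.filter (fun y => leadingOnes n y < leadingOnes n x),
        mutProb n x y) * ((leadingOnes n z : ℝ) - (leadingOnes n x : ℝ)) else 0) = 0 := by
    rw [Finset.sum_ite_eq' Finset.univ x]
    simp
  rw [h2, add_zero, Finset.sum_comm]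
  apply Finset.sum_congr rfl
  intro j hj
  have hjn : j < n := (Finset.mem_Ico.mp hj).2
  exact sum_mut_prefix x hjn

end Main

/-- Exact fitness-distance drift of the (1+1) EA on LeadingOnes (Lemma 1, item 1):
conditional on the fitness distance `X_t = n - LeadingOnes(x_t)` being `m ≥ 1`,
`E[X_t - X_{t+1} | X_t = m] = (2 - 2^{1-m})·(1 - 1/n)^{n-m}/n`. -/
theorem leadingOnes_drift (n : ℕ) (hn : 2 ≤ n) (t : ℕ) (m : ℕ) (hm : 1 ≤ m) (hmn : m ≤ n)
    (hpos : 0 < ∑ x ∈ Finset.univ.filter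
        (fun x : Fin n → Bool => n - leadingOnes n x = m),
      eaDist n (leadingOnes n) t x) :
    (∑ x ∈ Finset.univ.filter (fun x : Fin n → Bool => n - leadingOnes n x = m),
        ∑ z : Fin n → Bool, eaDist n (leadingOnes n) t x * eaStep n (leadingOnes n) x z *
          ((leadingOnes n z : ℝ) - (leadingOnes n x : ℝ))) /
      (∑ x ∈ Finset.univ.filter (fun x : Fin n → Bool => n - leadingOnes n x = m),
        eaDist n (leadingOnes n) t x) =
    (2 - (2 : ℝ) ^ ((1 : ℤ) - (m : ℤ))) * (1 - 1 / (n : ℝ)) ^ (n - m) / n := by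
  set k := n - m with hkdef
  have hkn : k < n := by omega
  have hmem : ∀ x : Fin n → Bool, (n - leadingOnes n x = m) ↔ leadingOnes n x = k := by
    intro x; have := lo_le x; omega
  set F := Finset.univ.filter (fun x : Fin n → Bool => n - leadingOnes n x = m) with hF
  set x0 : Fin n → Bool := fun i => decide ((i:ℕ) < k) with hx0
  have hx0k : leadingOnes n x0 = k := by
    apply lo_eq x0 k hkn.le
    · intro i hi; simp [hx0, hi]
    · intro h; simp [hx0]
  set c : ℝ := eaDist n (leadingOnes n) t x0 with hc
  have hconst : ∀ x : Fin n → Bool, leadingOnes n x = k → eaDist n (leadingOnes n) t x = c :=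
    fun x hx => eaDist_const t x x0 (by rw [hx, hx0k])
  -- cardinality of the fiber
  have hcard : ((F.card : ℝ)) = 2^(n-1-k) := by
    have h1 : ((F.card : ℝ)) = ∑ x ∈ F, (1:ℝ) := by
      rw [Finset.sum_const, nsmul_eq_mul, mul_one]
    have h2 : ∀ x : Fin n → Bool, (if n - leadingOnes n x = m then (1:ℝ) else 0)
        = (if leadingOnes n x = k then ∏ i : Fin n, (if (i:ℕ) ≤ k then (1:ℝ) else 1) else 0) := by
      intro x
      rw [if_congr (hmem x) rfl rfl]
      simp
    rw [h1, hF, Finset.sum_filter, Finset.sum_congr rfl (fun x _ => h2 x),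
      fiber_sum (fun _ => (1:ℝ)) le_rfl hkn]
    norm_num
  -- denominator
  have hden : (∑ x ∈ F, eaDist n (leadingOnes n) t x) = c * 2^(n-1-k) := by
    rw [Finset.sum_congr rfl (fun x hx => hconst x ((hmem x).mp (Finset.mem_filter.mp hx).2)),
      Finset.sum_const, nsmul_eq_mul, hcard]
    ring
  -- numerator
  have hnum : (∑ x ∈ F, ∑ z : Fin n → Bool, eaDist n (leadingOnes n) t x *
        eaStep n (leadingOnes n) x z * ((leadingOnes n z : ℝ) - (leadingOnes n x : ℝ)))
      = c * ((1 - 1/(n:ℝ))^k * (1/n) * (2^(n-k) - 1)) := by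
    have h3 : ∀ x ∈ F, (∑ z : Fin n → Bool, eaDist n (leadingOnes n) t x *
          eaStep n (leadingOnes n) x z * ((leadingOnes n z : ℝ) - (leadingOnes n x : ℝ)))
        = c * ∑ j ∈ Finset.Ico k n, ∏ i : Fin n,
            (if (i : ℕ) ≤ j then (if x i = true then 1 - 1/(n:ℝ) else 1/(n:ℝ)) else 1) := by
      intro x hx
      have hxk : leadingOnes n x = k := (hmem x).mp (Finset.mem_filter.mp hx).2
      rw [← D_eq x hxk hkn, Finset.mul_sum]
      apply Finset.sum_congr rfl
      intro z _
      rw [hconst x hxk]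
      ring
    rw [Finset.sum_congr rfl h3, ← Finset.mul_sum]
    congr 1
    -- ∑ x ∈ F, ∑ j = ∑ j, ∑ x ∈ F
    rw [Finset.sum_comm]
    have h4 : ∀ j ∈ Finset.Ico k n, (∑ x ∈ F, ∏ i : Fin n,
          (if (i : ℕ) ≤ j then (if x i = true then 1 - 1/(n:ℝ) else 1/(n:ℝ)) else 1))
        = (1 - 1/(n:ℝ))^k * (1/n) * 2^(n-1-j) := by
      intro j hj
      obtain ⟨hkj, hjn⟩ := Finset.mem_Ico.mp hj
      have h5 : ∀ x : Fin n → Bool, (if n - leadingOnes n x = m then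
            (∏ i : Fin n, (if (i : ℕ) ≤ j then (if x i = true then 1 - 1/(n:ℝ) else 1/(n:ℝ)) else 1))
            else 0)
          = (if leadingOnes n x = k then ∏ i : Fin n,
              (if (i:ℕ) ≤ j then (fun b => if b = true then 1 - 1/(n:ℝ) else 1/(n:ℝ)) (x i) else 1)
            else 0) := by
        intro x
        exact if_congr (hmem x) rfl rfl
      rw [hF, Finset.sum_filter, Finset.sum_congr rfl (fun x _ => h5 x),
        fiber_sum (fun b => if b = true then 1 - 1/(n:ℝ) else 1/(n:ℝ)) hkj hjn]
      norm_num
    rw [Finset.sum_congr rfl h4]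
    have h6 : ∑ j ∈ Finset.Ico k n, (1 - 1/(n:ℝ))^k * (1/n) * 2^(n-1-j)
        = (1 - 1/(n:ℝ))^k * (1/n) * ∑ j ∈ Finset.Ico k n, (2:ℝ)^(n-1-j) := by
      rw [Finset.mul_sum]
    rw [h6, geo_sum hkn]
  rw [hnum, hden]
  rw [hden] at hpos
  have h2e : (0:ℝ) < 2^(n-1-k) := by positivity
  have hcpos : 0 < c := by
    rcases lt_trichotomy c 0 with h | h | h
    · exact absurd hpos (not_lt.mpr (le_of_lt (mul_neg_of_neg_of_pos h h2e)))
    · rw [h, zero_mul] at hpos; exact absurd hpos (lt_irrefl 0)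
    · exact h
  have hcne : c ≠ 0 := ne_of_gt hcpos
  rw [mul_div_mul_left _ _ hcne]
  -- final algebra
  have hnne : (n:ℝ) ≠ 0 := Nat.cast_ne_zero.mpr (by omega)
  have hm' : m = (n-1-k) + 1 := by omega
  have hnk : n - k = (n-1-k) + 1 := by omega
  set e := n - 1 - k with he
  have hzp : (2:ℝ) ^ ((1:ℤ) - (m:ℤ)) = 2 / 2^m := by
    rw [zpow_sub₀ (by norm_num : (2:ℝ) ≠ 0), zpow_one, zpow_natCast]
  rw [hzp, hnk, hm', pow_succ]
  have h2ne : (2:ℝ)^e ≠ 0 := ne_of_gt (by positivity)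
  field_simp
end Inv
end

section
/- For the (1+1) EA on OneMax with n bits, let V_t be the fitness (number of ones) after t iterations. Then for all t ≥ 0, E[V_t] ≥ n(1 - exp(-t/(en))/2), assuming the initial search point is uniformly random so that E[V_0] = n/2. -/
/-!
Let `d = n - oneMax` be the distance to the optimum. From any `x`, each of the `d x` mutations
flipping exactly one zero bit has probability `(1/n)(1 - 1/n)^(n-1) ≥ 1/(en)`, is accepted, and
lowers `d` by one, while no accepted offspring raises `d`. Hence one step contracts the expected
distance by `1 - 1/(en) ≤ exp(-1/(en))`, and by linearity of expectation
`E[d_t] ≤ exp(-t/(en)) E[d_0] = exp(-t/(en)) n/2`.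
-/

open Finset

/-- Number of ones in a bit string. -/
def oneMax (n : ℕ) (x : Fin n → Bool) : ℕ :=
  (Finset.univ.filter (fun i : Fin n => x i = true)).card

/-- Probability that standard bit mutation flips one prescribed bit and no other. -/
noncomputable def singleFlipProb (n : ℕ) : ℝ :=
  1 / n * (1 - 1 / n) ^ (n - 1)

noncomputable def eaExpect (n : ℕ) (f : (Fin n → Bool) → ℕ) (t : ℕ)
    (g : (Fin n → Bool) → ℝ) : ℝ :=
  ∑ x, eaDist n f t x * g x

section Kernel

variable {n : ℕ}

lemma mutProb_nonneg (x y : Fin n → Bool) : 0 ≤ mutProb n x y :=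
  prod_nonneg fun i _ => by
    have : 1 / (n : ℝ) ≤ 1 := by simpa only [one_div] using Nat.cast_inv_le_one n
    split_ifs <;> [linarith; positivity]

lemma sum_mutProb (x : Fin n → Bool) : ∑ y, mutProb n x y = 1 := by
  unfold mutProb
  rw [← Fintype.prod_sum (fun i (b : Bool) => if b = x i then 1 - 1 / (n : ℝ) else 1 / n)]
  refine prod_eq_one fun i _ => ?_
  cases x i <;> simp

lemma eaStep_nonneg (f : (Fin n → Bool) → ℕ) (x z : Fin n → Bool) : 0 ≤ eaStep n f x z :=
  add_nonneg (by split_ifs <;> simp [mutProb_nonneg])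
    (by split_ifs <;> simp [sum_nonneg, mutProb_nonneg])

lemma sum_eaStep_mul (f : (Fin n → Bool) → ℕ) (g : (Fin n → Bool) → ℝ) (x : Fin n → Bool) :
    ∑ z, eaStep n f x z * g z =
      g x - ∑ z ∈ univ.filter (fun z => f x ≤ f z), mutProb n x z * (g x - g z) := by
  have hsplit := sum_filter_add_sum_filter_not univ (fun z => f x ≤ f z) (mutProb n x)
  simp only [not_le, sum_mutProb] at hsplit
  simp only [eaStep, add_mul, ite_mul, zero_mul, sum_add_distrib, ← sum_filter,
    filter_eq', mem_univ, if_true, sum_singleton, mul_sub, sum_sub_distrib, ← sum_mul]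
  linear_combination g x * hsplit

lemma sum_eaStep (f : (Fin n → Bool) → ℕ) (x : Fin n → Bool) : ∑ z, eaStep n f x z = 1 := by
  simpa using sum_eaStep_mul f (fun _ => 1) x

end Kernel

section Expectation

variable {n : ℕ} {f : (Fin n → Bool) → ℕ}

lemma eaDist_nonneg (t : ℕ) (x : Fin n → Bool) : 0 ≤ eaDist n f t x := by
  induction t generalizing x with
  | zero => simp only [eaDist]; positivity
  | succ t ih => exact sum_nonneg fun y _ => mul_nonneg (ih y) (eaStep_nonneg f y x)

lemma eaExpect_zero (g : (Fin n → Bool) → ℝ) : eaExpect n f 0 g = (1 / 2) ^ n * ∑ x, g x := by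
  simp only [eaExpect, eaDist, mul_sum]

lemma eaExpect_succ (t : ℕ) (g : (Fin n → Bool) → ℝ) :
    eaExpect n f (t + 1) g = eaExpect n f t (fun x => ∑ z, eaStep n f x z * g z) := by
  simp only [eaExpect, eaDist, sum_mul, mul_sum, mul_assoc]
  exact sum_comm

lemma eaExpect_mono {t : ℕ} {g g' : (Fin n → Bool) → ℝ} (h : ∀ x, g x ≤ g' x) :
    eaExpect n f t g ≤ eaExpect n f t g' :=
  sum_le_sum fun x _ => mul_le_mul_of_nonneg_left (h x) (eaDist_nonneg t x)

lemma eaExpect_one (t : ℕ) : eaExpect n f t (fun _ => 1) = 1 := by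
  induction t with
  | zero => simp [eaExpect_zero]
  | succ t ih => simpa [eaExpect_succ, sum_eaStep] using ih

lemma eaExpect_const_sub (t : ℕ) (c : ℝ) (g : (Fin n → Bool) → ℝ) :
    eaExpect n f t (fun x => c - g x) = c - eaExpect n f t g := by
  have := eaExpect_one (f := f) t
  simp only [eaExpect, mul_one] at this
  simp only [eaExpect, mul_sub, sum_sub_distrib, ← sum_mul, this, one_mul]

/-- Fixed-budget multiplicative drift. -/
lemma eaExpect_le_pow_mul_of_drift {a : ℝ} (ha : 0 ≤ a) {g : (Fin n → Bool) → ℝ}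
    (hdrift : ∀ x, ∑ z, eaStep n f x z * g z ≤ a * g x) (t : ℕ) :
    eaExpect n f t g ≤ a ^ t * eaExpect n f 0 g := by
  induction t with
  | zero => simp
  | succ t ih =>
    calc eaExpect n f (t + 1) g ≤ eaExpect n f t (fun x => a * g x) :=
          (eaExpect_succ t g).trans_le (eaExpect_mono hdrift)
      _ = a * eaExpect n f t g := by simp only [eaExpect, mul_left_comm, ← mul_sum]
      _ ≤ a ^ (t + 1) * eaExpect n f 0 g := by
          rw [pow_succ', mul_assoc]; exact mul_le_mul_of_nonneg_left ih ha

end Expectation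

section OneMax

variable {n : ℕ}

lemma card_filter_eq_false_add_oneMax (x : Fin n → Bool) :
    #(univ.filter fun i => x i = false) + oneMax n x = n := by
  simpa [oneMax, add_comm] using
    card_filter_add_card_filter_not (s := univ) (fun i => x i = true)

lemma oneMax_le (x : Fin n → Bool) : oneMax n x ≤ n := by
  have := card_filter_eq_false_add_oneMax x
  omega

lemma sum_oneMax : ∑ x : Fin n → Bool, (oneMax n x : ℝ) = n * 2 ^ n / 2 := by
  have hnot : Function.Involutive fun (x : Fin n → Bool) i => !x i := fun x => by simp
  have hzeros (x : Fin n → Bool) :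
      oneMax n (fun i => !x i) = #(univ.filter fun i => x i = false) := by
    simp [oneMax]
  have hsum := Equiv.sum_comp hnot.toPerm fun x => (oneMax n x : ℝ)
  simp only [Function.Involutive.coe_toPerm, hzeros] at hsum
  have htotal : ∑ x : Fin n → Bool, ((#(univ.filter fun i => x i = false) : ℝ) + oneMax n x) =
      n * 2 ^ n := by
    simp [← Nat.cast_add, card_filter_eq_false_add_oneMax, mul_comm]
  rw [sum_add_distrib, hsum] at htotal
  linarith

lemma oneMax_update_true {x : Fin n → Bool} {i : Fin n} (hi : x i = false) :
    oneMax n (Function.update x i true) = oneMax n x + 1 := by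
  have : univ.filter (fun j => Function.update x i true j = true)
      = insert i (univ.filter fun j => x j = true) := by
    ext j
    rcases eq_or_ne j i with rfl | h <;> simp [*]
  rw [oneMax, this, card_insert_of_notMem (by simp [hi]), oneMax]

lemma mutProb_update_not (x : Fin n → Bool) (i : Fin n) :
    mutProb n x (Function.update x i (!x i)) = singleFlipProb n := by
  rw [mutProb, ← mul_prod_erase univ _ (mem_univ i), prod_congr rfl fun j hj => by
    rw [Function.update_of_ne (ne_of_mem_erase hj), if_pos rfl]]
  simp [singleFlipProb]

lemma eaExpect_zero_oneMax (f : (Fin n → Bool) → ℕ) :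
    eaExpect n f 0 (fun x => oneMax n x) = n / 2 := by
  rw [eaExpect_zero, sum_oneMax, div_pow, one_pow]
  field_simp

lemma sum_eaStep_mul_dist_le (x : Fin n → Bool) :
    ∑ z, eaStep n (oneMax n) x z * ((n : ℝ) - oneMax n z) ≤
      (1 - singleFlipProb n) * ((n : ℝ) - oneMax n x) := by
  set zeros := univ.filter fun i => x i = false
  have hzeros : (#zeros : ℝ) = n - oneMax n x := by
    rw [eq_sub_iff_add_eq]
    exact_mod_cast card_filter_eq_false_add_oneMax x
  have hinj : Set.InjOn (fun i => Function.update x i true) zeros := by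
    intro i hi j _ h
    by_contra hne
    simpa [Function.update_of_ne hne, (mem_filter.1 hi).2] using congrFun h i
  have hflips : zeros.image (fun i => Function.update x i true) ⊆
      univ.filter fun z => oneMax n x ≤ oneMax n z := by
    simp only [subset_iff, mem_image, mem_filter, mem_univ, true_and]
    rintro _ ⟨i, hi, rfl⟩
    simp [oneMax_update_true (mem_filter.1 hi).2]
  -- flipping any single zero bit is accepted and decreases the distance by one
  have hgain : #zeros * singleFlipProb n ≤
      ∑ z ∈ univ.filter (fun z => oneMax n x ≤ oneMax n z),
        mutProb n x z * ((n - oneMax n x : ℝ) - (n - oneMax n z)) := by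
    calc (#zeros : ℝ) * singleFlipProb n
        = ∑ z ∈ zeros.image (fun i => Function.update x i true),
            mutProb n x z * ((n - oneMax n x : ℝ) - (n - oneMax n z)) := by
          rw [sum_image hinj, ← nsmul_eq_mul, ← sum_const]
          refine sum_congr rfl fun i hi => ?_
          have hi := (mem_filter.1 hi).2
          have := mutProb_update_not x i
          rw [hi, Bool.not_false] at this
          simp [this, oneMax_update_true hi]
      _ ≤ _ := sum_le_sum_of_subset_of_nonneg hflips fun z hz _ => by
          have : (oneMax n x : ℝ) ≤ oneMax n z := by exact_mod_cast (mem_filter.1 hz).2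
          nlinarith [mutProb_nonneg x z]
  rw [sum_eaStep_mul]
  rw [hzeros] at hgain
  linarith

end OneMax

lemma exp_neg_one_le_one_sub_one_div_pow (n : ℕ) :
    Real.exp (-1) ≤ (1 - 1 / (n : ℝ)) ^ (n - 1) := by
  rcases n with _ | m
  · simp
  rcases m.eq_zero_or_pos with rfl | hm
  · simp
  have : 1 - 1 / ((m + 1 : ℕ) : ℝ) = (1 + (m : ℝ)⁻¹)⁻¹ := by
    have : (m : ℝ) ≠ 0 := by positivity
    push_cast
    field_simp
    ring
  rw [Nat.add_sub_cancel, this, inv_pow, Real.exp_neg]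
  exact inv_anti₀ (by positivity) Real.one_add_inv_pow_le_exp

lemma one_div_exp_mul_le_singleFlipProb (n : ℕ) : 1 / (Real.exp 1 * n) ≤ singleFlipProb n :=
  calc 1 / (Real.exp 1 * n) = 1 / n * Real.exp (-1) := by rw [Real.exp_neg]; ring
    _ ≤ singleFlipProb n :=
      mul_le_mul_of_nonneg_left (exp_neg_one_le_one_sub_one_div_pow n) (by positivity)

theorem oneMax_fixed_budget_general (n : ℕ) (t : ℕ) :
    (n : ℝ) * (1 - Real.exp (-(t : ℝ) / (Real.exp 1 * n)) / 2) ≤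
      ∑ x : Fin n → Bool, eaDist n (oneMax n) t x * (oneMax n x : ℝ) := by
  set c := 1 / (Real.exp 1 * n)
  have hcontract (x : Fin n → Bool) :
      ∑ z, eaStep n (oneMax n) x z * ((n : ℝ) - oneMax n z) ≤
        Real.exp (-c) * ((n : ℝ) - oneMax n x) := by
    have hnonneg : (0 : ℝ) ≤ n - oneMax n x := sub_nonneg.2 (by exact_mod_cast oneMax_le x)
    calc _ ≤ (1 - singleFlipProb n) * ((n : ℝ) - oneMax n x) := sum_eaStep_mul_dist_le x
      _ ≤ (1 - c) * ((n : ℝ) - oneMax n x) := by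
          gcongr
          exact one_div_exp_mul_le_singleFlipProb n
      _ ≤ Real.exp (-c) * ((n : ℝ) - oneMax n x) := by
          gcongr
          exact Real.one_sub_le_exp_neg c
  have hdist := eaExpect_le_pow_mul_of_drift (Real.exp_nonneg _) hcontract t
  rw [eaExpect_const_sub, eaExpect_const_sub, eaExpect_zero_oneMax, ← Real.exp_nat_mul,
    show (t : ℝ) * -c = -(t : ℝ) / (Real.exp 1 * n) by ring] at hdist
  change _ ≤ eaExpect n (oneMax n) t fun x => (oneMax n x : ℝ)
  linarith

/-- Fixed-budget lower bound for the (1+1) EA on OneMax (Theorem 5, "furthermore"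
clause): starting from a uniformly random search point, the expected fitness
after `t` iterations is at least `n(1 - exp(-t/(en))/2)`. -/
theorem oneMax_fixed_budget (n : ℕ) (hn : 1 ≤ n) (t : ℕ) :
    (n : ℝ) * (1 - Real.exp (-(t : ℝ) / (Real.exp 1 * n)) / 2) ≤
      ∑ x : Fin n → Bool, eaDist n (oneMax n) t x * (oneMax n x : ℝ) :=
  oneMax_fixed_budget_general n t
end
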